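/- Let 0 < p < 4 and ω² = p/4 with ω ∈ (−1,1). There exist constants C > 0, a₀ ∈ (0,1) and ε₁ > 0 such that for all a ∈ (0, a₀) and all λ ∈ (−1,1) with |λ − ω| ≤ ε₁, one has | S_λ( (1+a)Φ_ω ) − S_λ( Φ_ω ) | ≤ C·( a² + a·|λ − ω| ). -/

import Mathlib

open MeasureTheory Real Filter

/-- The explicit ground state `φ_ω` of `-φ'' + (1-ω²)φ = φ^{p+1}`. -/
noncomputable def phi (p ω : ℝ) : ℝ → ℝ := fun x =>
  ((p + 2) * (1 - ω ^ 2) / 2) ^ (1 / p) *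
    Real.cosh (p / 2 * Real.sqrt (1 - ω ^ 2) * x) ^ (-(2 / p))

/-- Momentum `Q(u,v) = ∫ u v`. -/
noncomputable def Qm (u v : ℝ → ℝ) : ℝ := ∫ x : ℝ, u x * v x

/-- Energy `E(u,v) = ½∫((∂ₓu)² + u² + v²) - (1/(p+2))∫|u|^{p+2}`. -/
noncomputable def En (p : ℝ) (u v : ℝ → ℝ) : ℝ :=
  (1 / 2) * (∫ x : ℝ, ((deriv u x) ^ 2 + (u x) ^ 2 + (v x) ^ 2))
    - (1 / (p + 2)) * ∫ x : ℝ, |u x| ^ (p + 2)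

/-- Action `S_ω = E + ω Q`. -/
noncomputable def Sfun (p ω : ℝ) (u v : ℝ → ℝ) : ℝ := En p u v + ω * Qm u v

/-!
Write `S_λ = K_λ - N` with `K_λ(u,v) = ½∫(u'² + u² + v²) + λ Q(u,v)` quadratic and
`N(u) = (1/(p+2)) ∫|u|^{p+2}` homogeneous of degree `p+2`. Then
`S_λ((1+a)Φ_ω) - S_λ(Φ_ω) = ((1+a)² - 1) K_λ(Φ_ω) - ((1+a)^{p+2} - 1) N(φ_ω)`.
The Nehari identity `2 K_ω(Φ_ω) = (p+2) N(φ_ω)`, i.e. stationarity of `c ↦ S_ω(cΦ_ω)` at `c = 1`,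
cancels the part linear in `a`, and `K_λ - K_ω = (λ - ω) Q(Φ_ω)` gives the `a |λ - ω|` term.
The Nehari identity comes from the first integral `φ'² = (1-ω²)φ² - 2/(p+2) φ^{p+2}` of the
ground-state equation and the reduction formula `(s+1) ∫ sech^{s+2} = s ∫ sech^s`, obtained by
integrating the derivative of `tanh · sech^s` over the line.
-/

open Set

lemma cosh_rpow_neg_le {s : ℝ} (hs : 0 ≤ s) (y : ℝ) :
    cosh y ^ (-s) ≤ 2 ^ (s + 1) * (1 + (s * y) ^ 2)⁻¹ := by
  have hcosh : exp |y| / 2 ≤ cosh y := by rw [cosh_eq]; linarith [exp_abs_le y]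
  have hexp : (1 + (s * y) ^ 2) / 2 ≤ exp (s * |y|) := by
    have := quadratic_le_exp_of_nonneg (mul_nonneg hs (abs_nonneg y))
    rw [mul_pow, sq_abs, ← mul_pow] at this
    linarith [mul_nonneg hs (abs_nonneg y)]
  calc cosh y ^ (-s) = (cosh y ^ s)⁻¹ := rpow_neg (cosh_pos y).le s
    _ ≤ ((exp |y| / 2) ^ s)⁻¹ := by gcongr
    _ = 2 ^ s * (exp (s * |y|))⁻¹ := by
      rw [div_rpow (exp_pos _).le zero_le_two, ← exp_mul, mul_comm |y|]
      field_simp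
    _ ≤ 2 ^ s * (((1 + (s * y) ^ 2) / 2)⁻¹) := by gcongr
    _ = 2 ^ (s + 1) * (1 + (s * y) ^ 2)⁻¹ := by
      rw [rpow_add_one two_ne_zero]; field_simp

lemma continuous_cosh_mul_rpow (k r : ℝ) : Continuous fun x => cosh (k * x) ^ r :=
  (by fun_prop : Continuous fun x => cosh (k * x)).rpow_const fun x => Or.inl (cosh_pos _).ne'

lemma integrable_cosh_mul_rpow_neg {k s : ℝ} (hk : k ≠ 0) (hs : 0 < s) :
    Integrable fun x => cosh (k * x) ^ (-s) := by
  refine ((integrable_inv_one_add_sq.comp_mul_left' (mul_ne_zero hs.ne' hk)).const_mul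
    (2 ^ (s + 1))).mono' (continuous_cosh_mul_rpow k _).aestronglyMeasurable
    (ae_of_all _ fun x => ?_)
  rw [norm_of_nonneg (rpow_nonneg (cosh_pos _).le _)]
  simpa [mul_assoc] using cosh_rpow_neg_le hs.le (k * x)

lemma hasDerivAt_cosh_mul_rpow (k r x : ℝ) :
    HasDerivAt (fun y => cosh (k * y) ^ r) (r * k * tanh (k * x) * cosh (k * x) ^ r) x := by
  refine (((hasDerivAt_id' x).const_mul k).cosh.rpow_const (p := r)
    (Or.inl (cosh_pos _).ne')).congr_deriv ?_
  rw [rpow_sub_one (cosh_pos _).ne', tanh_eq_sinh_div_cosh]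
  ring

lemma hasDerivAt_tanh_mul_cosh_mul_rpow_neg (k s x : ℝ) :
    HasDerivAt (fun y => tanh (k * y) * cosh (k * y) ^ (-s))
      (k * ((s + 1) * (cosh (k * x) ^ (-s) / cosh (k * x) ^ 2) - s * cosh (k * x) ^ (-s))) x := by
  have htanh : HasDerivAt (fun y => tanh (k * y)) (k / cosh (k * x) ^ 2) x := by
    have h := ((hasDerivAt_id' x).const_mul k).sinh.fun_div
      ((hasDerivAt_id' x).const_mul k).cosh (cosh_pos _).ne'
    simp only [← tanh_eq_sinh_div_cosh] at h
    refine h.congr_deriv ?_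
    field_simp
    linear_combination k * cosh_sq (k * x)
  refine (htanh.mul (hasDerivAt_cosh_mul_rpow k (-s) x)).congr_deriv ?_
  have hc := (cosh_pos (k * x)).ne'
  rw [tanh_eq_sinh_div_cosh]
  field_simp
  linear_combination k * s * cosh_sq (k * x)

lemma integrable_cosh_mul_rpow_neg_div_sq {k s : ℝ} (hk : k ≠ 0) (hs : 0 < s) :
    Integrable fun x => cosh (k * x) ^ (-s) / cosh (k * x) ^ 2 := by
  refine (integrable_cosh_mul_rpow_neg hk hs).mono' ((continuous_cosh_mul_rpow k _).div
    (by fun_prop) fun x => (pow_pos (cosh_pos _) 2).ne').aestronglyMeasurable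
    (ae_of_all _ fun x => ?_)
  have hG : 0 ≤ cosh (k * x) ^ (-s) := rpow_nonneg (cosh_pos _).le _
  rw [norm_of_nonneg (div_nonneg hG (sq_nonneg _))]
  exact div_le_self hG (one_le_pow₀ (one_le_cosh _))

lemma integral_cosh_mul_rpow_neg_div_sq {k s : ℝ} (hk : k ≠ 0) (hs : 0 < s) :
    (s + 1) * ∫ x, cosh (k * x) ^ (-s) / cosh (k * x) ^ 2 = s * ∫ x, cosh (k * x) ^ (-s) := by
  have hG := integrable_cosh_mul_rpow_neg hk hs
  have hG₂ := integrable_cosh_mul_rpow_neg_div_sq hk hs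
  have hF : Integrable fun x => tanh (k * x) * cosh (k * x) ^ (-s) := by
    refine hG.mono' (continuous_iff_continuousAt.2 fun x =>
      (hasDerivAt_tanh_mul_cosh_mul_rpow_neg k s x).continuousAt).aestronglyMeasurable
      (ae_of_all _ fun x => ?_)
    have hG_nonneg : 0 ≤ cosh (k * x) ^ (-s) := rpow_nonneg (cosh_pos _).le _
    rw [norm_mul, norm_of_nonneg hG_nonneg]
    exact mul_le_of_le_one_left hG_nonneg (abs_tanh_lt_one _).le
  have h := integral_eq_zero_of_hasDerivAt_of_integrable (hasDerivAt_tanh_mul_cosh_mul_rpow_neg k s)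
    (((hG₂.const_mul _).sub (hG.const_mul _)).const_mul k) hF
  rw [integral_const_mul, integral_sub (hG₂.const_mul _) (hG.const_mul _), integral_const_mul,
    integral_const_mul] at h
  linarith [(mul_eq_zero.mp h).resolve_left hk]

section GroundState

variable {p ω : ℝ}

lemma phi_pos (hp : 0 < p) (hω : ω ^ 2 < 1) (x : ℝ) : 0 < phi p ω x := by
  have : 0 < (p + 2) * (1 - ω ^ 2) / 2 := by nlinarith
  unfold phi
  positivity

lemma phi_rpow (hp : 0 < p) (hω : ω ^ 2 < 1) (x : ℝ) :
    phi p ω x ^ p = (p + 2) * (1 - ω ^ 2) / 2 / cosh (p / 2 * √(1 - ω ^ 2) * x) ^ 2 := by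
  have hB : 0 ≤ (p + 2) * (1 - ω ^ 2) / 2 := by nlinarith
  have hc := cosh_pos (p / 2 * √(1 - ω ^ 2) * x)
  unfold phi
  rw [mul_rpow (by positivity) (by positivity), ← rpow_mul hB, ← rpow_mul hc.le,
    one_div_mul_cancel hp.ne', rpow_one, neg_mul, div_mul_cancel₀ _ hp.ne', rpow_neg hc.le,
    rpow_two]
  ring

lemma sq_phi (hp : 0 < p) (hω : ω ^ 2 < 1) (x : ℝ) :
    phi p ω x ^ 2 = ((p + 2) * (1 - ω ^ 2) / 2) ^ (2 / p) *
      cosh (p / 2 * √(1 - ω ^ 2) * x) ^ (-(4 / p)) := by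
  have hB : 0 ≤ (p + 2) * (1 - ω ^ 2) / 2 := by nlinarith
  have hc := cosh_pos (p / 2 * √(1 - ω ^ 2) * x)
  unfold phi
  rw [← rpow_two, mul_rpow (by positivity) (by positivity), ← rpow_mul hB, ← rpow_mul hc.le]
  ring_nf

lemma abs_phi_rpow (hp : 0 < p) (hω : ω ^ 2 < 1) (x : ℝ) :
    |phi p ω x| ^ (p + 2) = (p + 2) * (1 - ω ^ 2) / 2 *
      (phi p ω x ^ 2 / cosh (p / 2 * √(1 - ω ^ 2) * x) ^ 2) := by
  rw [abs_of_pos (phi_pos hp hω x), rpow_add (phi_pos hp hω x), phi_rpow hp hω, rpow_two]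
  ring

lemma hasDerivAt_phi (hp : p ≠ 0) (x : ℝ) :
    HasDerivAt (phi p ω)
      (-√(1 - ω ^ 2) * tanh (p / 2 * √(1 - ω ^ 2) * x) * phi p ω x) x := by
  refine ((hasDerivAt_cosh_mul_rpow _ _ x).const_mul _).congr_deriv ?_
  unfold phi
  field_simp

lemma deriv_phi_sq (hp : 0 < p) (hω : ω ^ 2 < 1) (x : ℝ) :
    deriv (phi p ω) x ^ 2 =
      (1 - ω ^ 2) * phi p ω x ^ 2 - 2 / (p + 2) * |phi p ω x| ^ (p + 2) := by
  rw [(hasDerivAt_phi hp.ne' x).deriv, abs_phi_rpow hp hω, tanh_eq_sinh_div_cosh]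
  set y := p / 2 * √(1 - ω ^ 2) * x
  have hc := (cosh_pos y).ne'
  field_simp
  rw [sq_sqrt (by linarith)]
  linear_combination (1 - ω ^ 2) * phi p ω x ^ 2 * sinh_sq y

lemma integrable_sq_phi (hp : 0 < p) (hω : ω ^ 2 < 1) : Integrable fun x => phi p ω x ^ 2 := by
  simp_rw [sq_phi hp hω]
  exact (integrable_cosh_mul_rpow_neg (by positivity) (by positivity)).const_mul _

lemma integrable_abs_phi_rpow (hp : 0 < p) (hω : ω ^ 2 < 1) :
    Integrable fun x => |phi p ω x| ^ (p + 2) := by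
  simp_rw [abs_phi_rpow hp hω, sq_phi hp hω, mul_div_assoc]
  exact ((integrable_cosh_mul_rpow_neg_div_sq (by positivity) (by positivity)).const_mul
    _).const_mul _

lemma integral_abs_phi_rpow (hp : 0 < p) (hω : ω ^ 2 < 1) :
    (p + 4) * ∫ x, |phi p ω x| ^ (p + 2) = 2 * (p + 2) * (1 - ω ^ 2) * ∫ x, phi p ω x ^ 2 := by
  have hκ : p / 2 * √(1 - ω ^ 2) ≠ 0 := by
    have := sqrt_pos.2 (sub_pos.2 hω)
    positivity
  have hred := integral_cosh_mul_rpow_neg_div_sq hκ (show 0 < 4 / p by positivity)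
  have hP : ∫ x, |phi p ω x| ^ (p + 2) = (p + 2) * (1 - ω ^ 2) / 2 *
      ((p + 2) * (1 - ω ^ 2) / 2) ^ (2 / p) * ∫ x, cosh (p / 2 * √(1 - ω ^ 2) * x) ^ (-(4 / p)) /
        cosh (p / 2 * √(1 - ω ^ 2) * x) ^ 2 := by
    rw [← integral_const_mul]
    congr 1
    ext x
    rw [abs_phi_rpow hp hω, sq_phi hp hω]
    ring
  have hI : ∫ x, phi p ω x ^ 2 = ((p + 2) * (1 - ω ^ 2) / 2) ^ (2 / p) *
      ∫ x, cosh (p / 2 * √(1 - ω ^ 2) * x) ^ (-(4 / p)) := by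
    rw [← integral_const_mul]
    simp_rw [sq_phi hp hω]
  rw [hP, hI]
  set J := ∫ x, cosh (p / 2 * √(1 - ω ^ 2) * x) ^ (-(4 / p))
  set J₂ := ∫ x, cosh (p / 2 * √(1 - ω ^ 2) * x) ^ (-(4 / p)) /
    cosh (p / 2 * √(1 - ω ^ 2) * x) ^ 2
  field_simp at hred
  linear_combination (p + 2) * (1 - ω ^ 2) / 2 * ((p + 2) * (1 - ω ^ 2) / 2) ^ (2 / p) * hred

lemma phi_nehari_identity (hp : 0 < p) (hω : ω ^ 2 < 1) :
    (∫ x, (deriv (phi p ω) x ^ 2 + phi p ω x ^ 2 + (-ω * phi p ω x) ^ 2)) +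
      2 * ω * Qm (phi p ω) (fun x => -ω * phi p ω x) = ∫ x, |phi p ω x| ^ (p + 2) := by
  have hQ : Qm (phi p ω) (fun x => -ω * phi p ω x) = -ω * ∫ x, phi p ω x ^ 2 := by
    rw [Qm, ← integral_const_mul]
    congr 1
    ext x
    ring
  have hT : (fun x => deriv (phi p ω) x ^ 2 + phi p ω x ^ 2 + (-ω * phi p ω x) ^ 2) =
      fun x => 2 * phi p ω x ^ 2 - 2 / (p + 2) * |phi p ω x| ^ (p + 2) := by
    ext x
    rw [deriv_phi_sq hp hω]
    ring
  rw [hT, integral_sub ((integrable_sq_phi hp hω).const_mul 2)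
    ((integrable_abs_phi_rpow hp hω).const_mul _), integral_const_mul, integral_const_mul, hQ]
  have := integral_abs_phi_rpow hp hω
  field_simp
  linear_combination -this

end GroundState

lemma Sfun_eq (p l : ℝ) (u v : ℝ → ℝ) :
    Sfun p l u v = (1 / 2 * (∫ x, (deriv u x ^ 2 + u x ^ 2 + v x ^ 2)) + l * Qm u v) -
      1 / (p + 2) * ∫ x, |u x| ^ (p + 2) := by
  unfold Sfun En
  ring

lemma Sfun_const_mul (p l : ℝ) {c : ℝ} (hc : 0 ≤ c) (u v : ℝ → ℝ) :
    Sfun p l (fun x => c * u x) (fun x => c * v x) =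
      c ^ 2 * (1 / 2 * (∫ x, (deriv u x ^ 2 + u x ^ 2 + v x ^ 2)) + l * Qm u v) -
        c ^ (p + 2) * (1 / (p + 2) * ∫ x, |u x| ^ (p + 2)) := by
  have hK : ∫ x, (deriv (fun y => c * u y) x ^ 2 + (c * u x) ^ 2 + (c * v x) ^ 2) =
      c ^ 2 * ∫ x, (deriv u x ^ 2 + u x ^ 2 + v x ^ 2) := by
    simp only [deriv_const_mul_field']
    rw [← integral_const_mul]
    congr 1
    ext x
    ring
  have hN : ∫ x, |c * u x| ^ (p + 2) = c ^ (p + 2) * ∫ x, |u x| ^ (p + 2) := by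
    rw [← integral_const_mul]
    congr 1
    ext x
    rw [abs_mul, abs_of_nonneg hc, mul_rpow hc (abs_nonneg _)]
  have hQ : Qm (fun x => c * u x) (fun x => c * v x) = c ^ 2 * Qm u v := by
    unfold Qm
    rw [← integral_const_mul]
    congr 1
    ext x
    ring
  rw [Sfun_eq, hK, hN, hQ]
  ring

lemma one_add_rpow_le_two_rpow_abs {y : ℝ} (hy0 : 0 ≤ y) (hy1 : y ≤ 1) (r : ℝ) :
    (1 + y) ^ r ≤ 2 ^ |r| :=
  calc (1 + y) ^ r ≤ (1 + y) ^ |r| := rpow_le_rpow_of_exponent_le (by linarith) (le_abs_self r)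
    _ ≤ 2 ^ |r| := rpow_le_rpow (by linarith) (by linarith) (abs_nonneg r)

lemma abs_one_add_rpow_sub_one_le (r : ℝ) {t : ℝ} (ht0 : 0 ≤ t) (ht1 : t ≤ 1) :
    |(1 + t) ^ r - 1| ≤ |r| * 2 ^ |r - 1| * t := by
  have hderiv (y : ℝ) (hy : y ∈ Icc 0 t) :
      HasDerivWithinAt (fun y => (1 + y) ^ r) (r * (1 + y) ^ (r - 1)) (Icc 0 t) y :=
    (((hasDerivAt_id' y).const_add 1).rpow_const
      (Or.inl (by linarith [hy.1]))).hasDerivWithinAt.congr_deriv (by ring)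
  have hbound (y : ℝ) (hy : y ∈ Icc 0 t) : ‖r * (1 + y) ^ (r - 1)‖ ≤ |r| * 2 ^ |r - 1| := by
    rw [norm_mul, norm_of_nonneg (rpow_nonneg (by linarith [hy.1]) _), Real.norm_eq_abs]
    gcongr
    exact one_add_rpow_le_two_rpow_abs hy.1 (hy.2.trans ht1) _
  simpa [abs_of_nonneg ht0] using (convex_Icc 0 t).norm_image_sub_le_of_norm_hasDerivWithin_le
    hderiv hbound (left_mem_Icc.2 ht0) (right_mem_Icc.2 ht0)

lemma abs_one_add_rpow_sub_one_sub_mul_le (q : ℝ) {a : ℝ} (ha0 : 0 ≤ a) (ha1 : a ≤ 1) :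
    |(1 + a) ^ q - 1 - q * a| ≤ |q| * (|q - 1| * 2 ^ |q - 2|) * a ^ 2 := by
  have hderiv (y : ℝ) (hy : y ∈ Icc 0 a) :
      HasDerivWithinAt (fun y => (1 + y) ^ q - 1 - q * y) (q * ((1 + y) ^ (q - 1) - 1))
        (Icc 0 a) y :=
    ((((hasDerivAt_id' y).const_add 1).rpow_const (Or.inl (by linarith [hy.1]))).sub_const 1
      |>.sub ((hasDerivAt_id' y).const_mul q)).hasDerivWithinAt.congr_deriv (by ring)
  have hbound (y : ℝ) (hy : y ∈ Icc 0 a) :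
      ‖q * ((1 + y) ^ (q - 1) - 1)‖ ≤ |q| * (|q - 1| * 2 ^ |q - 2|) * a := by
    rw [norm_mul, Real.norm_eq_abs, Real.norm_eq_abs, mul_assoc]
    gcongr
    calc |(1 + y) ^ (q - 1) - 1| ≤ |q - 1| * 2 ^ |q - 1 - 1| * y :=
          abs_one_add_rpow_sub_one_le _ hy.1 (hy.2.trans ha1)
      _ ≤ |q - 1| * 2 ^ |q - 2| * a := by
          rw [show q - 1 - 1 = q - 2 by ring]
          gcongr
          exact hy.2
  have := (convex_Icc 0 a).norm_image_sub_le_of_norm_hasDerivWithin_le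
    hderiv hbound (left_mem_Icc.2 ha0) (right_mem_Icc.2 ha0)
  simp only [add_zero, one_rpow, sub_self, mul_zero, sub_zero, Real.norm_eq_abs,
    abs_of_nonneg ha0] at this
  linarith

lemma abs_fibering_sub_le {q K N Q t a M : ℝ} (hK : 2 * K = q * N) (ha : 0 ≤ a) (ha1 : a ≤ 1)
    (hM : 0 ≤ M) (hTaylor : |(1 + a) ^ q - 1 - q * a| ≤ M * a ^ 2) :
    |((1 + a) ^ 2 - 1) * (K + t * Q) - ((1 + a) ^ q - 1) * N| ≤
      (|K| + M * |N| + 3 * |Q|) * (a ^ 2 + a * |t|) := by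
  have hsplit : ((1 + a) ^ 2 - 1) * (K + t * Q) - ((1 + a) ^ q - 1) * N =
      a ^ 2 * K + (2 * a + a ^ 2) * t * Q - ((1 + a) ^ q - 1 - q * a) * N := by
    linear_combination a * hK
  have hK' : |a ^ 2 * K| = a ^ 2 * |K| := by rw [abs_mul, abs_of_nonneg (sq_nonneg a)]
  have hQ' : |(2 * a + a ^ 2) * t * Q| ≤ 3 * (a * |t|) * |Q| := by
    rw [abs_mul, abs_mul, abs_of_nonneg (by positivity)]
    refine mul_le_mul_of_nonneg_right ?_ (abs_nonneg Q)
    nlinarith [mul_nonneg (mul_nonneg ha (abs_nonneg t)) (sub_nonneg.2 ha1)]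
  have hN' : |((1 + a) ^ q - 1 - q * a) * N| ≤ M * a ^ 2 * |N| := by
    rw [abs_mul]
    exact mul_le_mul_of_nonneg_right hTaylor (abs_nonneg N)
  rw [hsplit]
  calc _ ≤ |a ^ 2 * K + (2 * a + a ^ 2) * t * Q| + |((1 + a) ^ q - 1 - q * a) * N| := abs_sub _ _
    _ ≤ a ^ 2 * |K| + 3 * (a * |t|) * |Q| + M * a ^ 2 * |N| := by
      linarith [abs_add_le (a ^ 2 * K) ((2 * a + a ^ 2) * t * Q)]
    _ ≤ _ := by
      nlinarith [mul_nonneg (abs_nonneg K) (mul_nonneg ha (abs_nonneg t)),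
        mul_nonneg (mul_nonneg hM (abs_nonneg N)) (mul_nonneg ha (abs_nonneg t)),
        mul_nonneg (abs_nonneg Q) (sq_nonneg a)]

theorem action_difference_estimate_general (p ω : ℝ) (hp : 0 < p)
    (hω1 : -1 < ω) (hω2 : ω < 1) :
    ∃ C > 0, ∃ a₀ : ℝ, 0 < a₀ ∧ a₀ < 1 ∧ ∃ ε₁ > 0,
      ∀ a : ℝ, 0 < a → a < a₀ → ∀ l : ℝ, -1 < l → l < 1 → |l - ω| ≤ ε₁ →
        |Sfun p l (fun x => (1 + a) * phi p ω x)
            (fun x => -(1 + a) * ω * phi p ω x)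
          - Sfun p l (phi p ω) (fun x => -ω * phi p ω x)|
        ≤ C * (a ^ 2 + a * |l - ω|) := by
  have hω : ω ^ 2 < 1 := by nlinarith
  have hnehari := phi_nehari_identity hp hω
  set Q := Qm (phi p ω) fun x => -ω * phi p ω x
  set T := ∫ x, (deriv (phi p ω) x ^ 2 + phi p ω x ^ 2 + (-ω * phi p ω x) ^ 2)
  set P := ∫ x, |phi p ω x| ^ (p + 2)
  set K := 1 / 2 * T + ω * Q
  set N := 1 / (p + 2) * P
  have hK : 2 * K = (p + 2) * N := by
    simp only [K, N]
    field_simp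
    linarith
  set M := |p + 2| * (|p + 2 - 1| * 2 ^ |p + 2 - 2|)
  refine ⟨|K| + M * |N| + 3 * |Q| + 1, by positivity, 1 / 2, by norm_num, by norm_num, 1, one_pos,
    fun a ha ha₀ l _ _ _ => ?_⟩
  have hv : (fun x => -(1 + a) * ω * phi p ω x) = fun x => (1 + a) * (-ω * phi p ω x) := by
    ext x
    ring
  rw [hv, Sfun_const_mul p l (by linarith : (0 : ℝ) ≤ 1 + a), Sfun_eq]
  calc _ = |((1 + a) ^ 2 - 1) * (K + (l - ω) * Q) - ((1 + a) ^ (p + 2) - 1) * N| := by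
        congr 1
        ring
    _ ≤ (|K| + M * |N| + 3 * |Q|) * (a ^ 2 + a * |l - ω|) :=
      abs_fibering_sub_le hK ha.le (by linarith) (by positivity)
        (abs_one_add_rpow_sub_one_sub_mul_le _ ha.le (by linarith))
    _ ≤ _ := mul_le_mul_of_nonneg_right (by linarith) (by positivity)

/-- At the critical frequency `ω² = p/4`:
`|S_λ((1+a)Φ_ω) - S_λ(Φ_ω)| ≤ C(a² + a|λ-ω|)` for small `a > 0` and `λ`
close to `ω`. -/
theorem action_difference_estimate (p ω : ℝ) (hp : 0 < p) (hp4 : p < 4)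
    (hω1 : -1 < ω) (hω2 : ω < 1) (hcrit : ω ^ 2 = p / 4) :
    ∃ C > 0, ∃ a₀ : ℝ, 0 < a₀ ∧ a₀ < 1 ∧ ∃ ε₁ > 0,
      ∀ a : ℝ, 0 < a → a < a₀ → ∀ l : ℝ, -1 < l → l < 1 → |l - ω| ≤ ε₁ →
        |Sfun p l (fun x => (1 + a) * phi p ω x)
            (fun x => -(1 + a) * ω * phi p ω x)
          - Sfun p l (phi p ω) (fun x => -ω * phi p ω x)|
        ≤ C * (a ^ 2 + a * |l - ω|) :=
  action_difference_estimate_general p ω hp hω1 hω2
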